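/- (One-round behaviour from stochastic initializations, oscillating counterexample.) For every ρ ∈ [0,1], let θ*(ρ) = (2ρ, 3ρ, 1+ρ) be the unique minimizer of the oscillating counterexample's on-policy weighted evaluation error. Then the greedy comparison satisfies: θ*(ρ)₂ > θ*(ρ)₁ (i.e., the approximate value 1+ρ of the class {C,D} exceeds the approximate value 3ρ of the class {B,E}) if and only if ρ < 1/2, and θ*(ρ)₁ > θ*(ρ)₂ if and only if ρ > 1/2. Hence one round of evaluation followed by greedification produces the deterministic right policy from every initial policy with ρ < 1/2 and the deterministic left policy from every initial policy with ρ > 1/2. -/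

import Mathlib

/-- Unique minimizer θ*(ρ) = (2ρ, 3ρ, 1+ρ) of the oscillating counterexample's
on-policy weighted evaluation error (components: class {A}, class {B,E}, class {C,D}). -/
noncomputable def oscTheta (ρ : ℝ) : ℝ × ℝ × ℝ := (2 * ρ, 3 * ρ, 1 + ρ)

/-- Greedification at A after evaluation: compare the right action's look-ahead
value θ*₂ = 1+ρ (class {C,D}) with the left action's look-ahead value θ*₁ = 3ρ
(class {B,E}); output is the new probability of the right action
(1 = right policy, 0 = left policy, ties broken toward the left action). -/
noncomputable def oscRound (ρ : ℝ) : ℝ :=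
  if (oscTheta ρ).2.2 > (oscTheta ρ).2.1 then 1 else 0

theorem oscTheta_left_lt_right_iff (ρ : ℝ) :
    (oscTheta ρ).2.1 < (oscTheta ρ).2.2 ↔ ρ < 1 / 2 := by
  show 3 * ρ < 1 + ρ ↔ ρ < 1 / 2
  constructor <;> intro h <;> linarith

theorem oscTheta_right_lt_left_iff (ρ : ℝ) :
    (oscTheta ρ).2.2 < (oscTheta ρ).2.1 ↔ 1 / 2 < ρ := by
  show 1 + ρ < 3 * ρ ↔ 1 / 2 < ρ
  constructor <;> intro h <;> linarith

theorem oscRound_of_lt {ρ : ℝ} (h : ρ < 1 / 2) : oscRound ρ = 1 :=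
  if_pos ((oscTheta_left_lt_right_iff ρ).2 h)

theorem oscRound_of_gt {ρ : ℝ} (h : 1 / 2 < ρ) : oscRound ρ = 0 :=
  if_neg (lt_asymm ((oscTheta_right_lt_left_iff ρ).2 h))

theorem osc_one_round_from_stochastic_init :
    ∀ ρ ∈ Set.Icc (0:ℝ) 1,
      ((oscTheta ρ).2.2 > (oscTheta ρ).2.1 ↔ ρ < 1/2) ∧
      ((oscTheta ρ).2.1 > (oscTheta ρ).2.2 ↔ ρ > 1/2) ∧
      (ρ < 1/2 → oscRound ρ = 1) ∧
      (ρ > 1/2 → oscRound ρ = 0) := fun ρ _ =>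
  ⟨oscTheta_left_lt_right_iff ρ, oscTheta_right_lt_left_iff ρ, oscRound_of_lt, oscRound_of_gt⟩
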